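/- arXiv:2304.01463 — 2 statements merged into one kernel-verified Lean document; each statement's English description precedes it below -/
import Mathlib

section
/- Let D_N^m be the N×N upper-triangular Toeplitz matrix over 𝔽₂ whose first row has ones exactly in positions 1 and m+1 (with D_N^0 the identity), and let G_n = F^{⊗n}. Then for any 0 ≤ m ≤ N−1, D_N^m G_n = G_n ∑_{l : g_{m+1, l+1} = 1, 1 ≤ l ≤ N−1} C_N^l. -/
/-!
Identify a row vector `v` with `∑ v_k x^k` in `𝔽₂[x]/(x^N - 1)`; right multiplication by
`C_N^l` is then multiplication by `x^l`. By Lucas' theorem row `i` of `G_n` is `(1 + x)^i`, and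
`(1 + x)^N = 1 + x^N = 0` in characteristic two. So row `i` of `D_N^m G_n` is
`(1 + x)^i + (1 + x)^(i + m)`, the second term vanishing exactly when `i + m ≥ N`, while the sum
of shifts is `(1 + x)^m + 1`. Concretely, `x` is the shift matrix `cyc N 1`, and a polynomial
in `x` is read off as row `0` of that matrix.
-/

/-- `G_n = F^{⊗n}` for `F = [[1,0],[1,1]]` over `𝔽₂` (0-indexed). -/
def polarG (n : ℕ) : Matrix (Fin (2^n)) (Fin (2^n)) (ZMod 2) :=
  Matrix.of fun i j => if j.val &&& i.val = j.val then 1 else 0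

/-- The `N×N` clockwise cyclic shift matrix by `j` places over `𝔽₂`. -/
def cyc (N j : ℕ) : Matrix (Fin N) (Fin N) (ZMod 2) :=
  Matrix.of fun i k => if (i.val + j) % N = k.val then 1 else 0

/-- `D_N^m`: the upper-triangular Toeplitz matrix over `𝔽₂` with ones on the main
diagonal and on the `m`-th superdiagonal (its first row has ones exactly in
positions `1` and `m+1`); `D_N^0` is the identity. -/
def toepD (N m : ℕ) : Matrix (Fin N) (Fin N) (ZMod 2) :=
  Matrix.of fun i j => if j.val = i.val ∨ j.val = i.val + m then 1 else 0

theorem Nat.and_eq_left_iff_mod_two_div_two {k i : ℕ} :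
    k &&& i = k ↔ (k % 2 = 1 → i % 2 = 1) ∧ k / 2 &&& i / 2 = k / 2 := by
  rw [← Nat.and_div_two]
  have hmod := @Nat.and_mod_two_eq_one k i
  constructor
  · intro h
    rw [h] at hmod
    exact ⟨fun hk => (hmod.1 hk).2, by rw [h]⟩
  · rintro ⟨hbit, hdiv⟩
    omega

theorem Nat.cast_choose_zmod_two (i k : ℕ) :
    (i.choose k : ZMod 2) = if k &&& i = k then 1 else 0 := by
  induction i using Nat.strong_induction_on generalizing k with
  | _ i ih =>
    rcases Nat.eq_zero_or_pos i with rfl | hi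
    · cases k <;> simp
    have hlucas :
        (i.choose k : ZMod 2) = (i % 2).choose (k % 2) * (i / 2).choose (k / 2) := by
      exact_mod_cast (ZMod.natCast_eq_natCast_iff _ _ _).mpr
        Choose.choose_modEq_choose_mod_mul_choose_div_nat
    rw [hlucas, ih (i / 2) (by omega)]
    simp only [Nat.and_eq_left_iff_mod_two_div_two (k := k) (i := i)]
    rcases Nat.mod_two_eq_zero_or_one i with hi2 | hi2 <;>
      rcases Nat.mod_two_eq_zero_or_one k with hk2 | hk2 <;> simp [hi2, hk2]

theorem Finset.sum_filter_eq_one_eq_sum_smul {ι M : Type*} [AddCommMonoid M]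
    [Module (ZMod 2) M] (s : Finset ι) (v : ι → ZMod 2) (f : ι → M) :
    ∑ i ∈ s with v i = 1, f i = ∑ i ∈ s, v i • f i := by
  rw [Finset.sum_filter]
  refine Finset.sum_congr rfl fun i _ => ?_
  obtain h | h : v i = 0 ∨ v i = 1 := by generalize v i = a; revert a; decide
  all_goals simp [h]

theorem cyc_mul_cyc (N a b : ℕ) : cyc N a * cyc N b = cyc N (a + b) := by
  ext i j
  rw [Matrix.mul_apply, Finset.sum_eq_single ⟨(i + a) % N, Nat.mod_lt _ i.pos⟩]
  · simp [cyc, ← add_assoc]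
  · intro k _ hk
    simp only [cyc, Matrix.of_apply, ite_mul, one_mul, zero_mul, ite_eq_right_iff]
    exact fun h => absurd (Fin.ext h.symm) hk
  · simp

theorem cyc_zero (N : ℕ) : cyc N 0 = 1 := by
  ext i j
  simp [cyc, Matrix.one_apply, Nat.mod_eq_of_lt i.isLt, Fin.ext_iff]

theorem cyc_self (N : ℕ) : cyc N N = 1 := by
  ext i j
  simp [cyc, Matrix.one_apply, Nat.mod_eq_of_lt i.isLt, Fin.ext_iff]

theorem cyc_one_pow (N l : ℕ) : cyc N 1 ^ l = cyc N l := by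
  induction l with
  | zero => rw [pow_zero, cyc_zero]
  | succ l ih => rw [pow_succ, ih, cyc_mul_cyc]

theorem cyc_apply_zero_left {N : ℕ} [NeZero N] (l j : Fin N) :
    cyc N l 0 j = if l = j then 1 else 0 := by
  simp [cyc, Nat.mod_eq_of_lt l.isLt, Fin.ext_iff]

theorem one_add_cyc_one_pow_of_lt {N m : ℕ} (hm : m < N) :
    (1 + cyc N 1) ^ m = ∑ l : Fin N, (m.choose l : ZMod 2) • cyc N l := by
  rw [add_comm, (Commute.one_right _).add_pow,
    Fin.sum_univ_eq_sum_range (fun l => (m.choose l : ZMod 2) • cyc N l)]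
  refine (Finset.sum_subset (Finset.range_subset_range.2 hm) fun l _ hl => ?_).trans
    (Finset.sum_congr rfl fun l _ => ?_)
  · rw [Finset.mem_range, not_lt] at hl
    rw [Nat.choose_eq_zero_of_lt hl, Nat.cast_zero, mul_zero]
  · rw [one_pow, mul_one, cyc_one_pow, Nat.cast_smul_eq_nsmul, nsmul_eq_mul']

theorem one_add_cyc_one_pow_two_pow (n : ℕ) : (1 + cyc (2 ^ n) 1) ^ 2 ^ n = 0 := by
  rw [add_pow_char_pow_of_commute 2 n (Commute.one_left _), one_pow, cyc_one_pow, cyc_self,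
    CharTwo.add_self_eq_zero]

theorem one_add_cyc_one_pow_eq_zero_of_le {n k : ℕ} (hk : 2 ^ n ≤ k) :
    (1 + cyc (2 ^ n) 1) ^ k = 0 := by
  rw [← Nat.add_sub_cancel' hk, pow_add, one_add_cyc_one_pow_two_pow, zero_mul]

theorem polarG_apply (n : ℕ) (i j : Fin (2 ^ n)) :
    polarG n i j = (i.val.choose j.val : ZMod 2) := by
  rw [Nat.cast_choose_zmod_two]
  rfl

theorem polarG_apply_eq_pow_apply (n : ℕ) (i j : Fin (2 ^ n)) :
    polarG n i j = ((1 + cyc (2 ^ n) 1) ^ i.val) 0 j := by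
  simp [one_add_cyc_one_pow_of_lt i.isLt, Matrix.sum_apply, cyc_apply_zero_left, polarG_apply]

theorem polarG_mul_apply (n : ℕ) (A : Matrix (Fin (2 ^ n)) (Fin (2 ^ n)) (ZMod 2))
    (i j : Fin (2 ^ n)) : (polarG n * A) i j = ((1 + cyc (2 ^ n) 1) ^ i.val * A) 0 j := by
  simp only [Matrix.mul_apply, polarG_apply_eq_pow_apply]

theorem toepD_zero (N : ℕ) : toepD N 0 = 1 := by
  ext i j
  simp [toepD, Matrix.one_apply, Fin.ext_iff, eq_comm]

theorem toepD_mul_apply {N m : ℕ} (hm : m ≠ 0) (A : Matrix (Fin N) (Fin N) (ZMod 2))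
    (i j : Fin N) :
    (toepD N m * A) i j = A i j + if h : i.val + m < N then A ⟨i.val + m, h⟩ j else 0 := by
  have hsplit : ∀ k, toepD N m i k * A k j =
      (if i = k then A k j else 0) + if k.val = i.val + m then A k j else 0 := by
    intro k
    simp only [toepD, Matrix.of_apply, Fin.ext_iff]
    split_ifs <;> first | omega | simp
  rw [Matrix.mul_apply, Finset.sum_congr rfl fun k _ => hsplit k, Finset.sum_add_distrib,
    Finset.sum_ite_eq, if_pos (Finset.mem_univ _)]
  congr 1
  split_ifs with h
  · rw [Finset.sum_eq_single ⟨_, h⟩ (fun k _ hk => if_neg fun hk' => hk (Fin.ext hk'))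
      (by simp)]
    exact if_pos rfl
  · exact Finset.sum_eq_zero fun k _ => if_neg fun (hk : k.val = i.val + m) => h (hk ▸ k.isLt)

theorem toepD_mul_polarG_apply {n m : ℕ} (hm : m ≠ 0) (i j : Fin (2 ^ n)) :
    (toepD (2 ^ n) m * polarG n) i j =
      ((1 + cyc (2 ^ n) 1) ^ i.val + (1 + cyc (2 ^ n) 1) ^ (i.val + m)) 0 j := by
  rw [toepD_mul_apply hm, Matrix.add_apply, polarG_apply_eq_pow_apply]
  split_ifs with h
  · rw [polarG_apply_eq_pow_apply]
  · rw [one_add_cyc_one_pow_eq_zero_of_le (not_lt.1 h), Matrix.zero_apply]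

theorem sum_filter_polarG_eq_one (n : ℕ) (m : Fin (2 ^ n)) :
    ∑ l ∈ Finset.univ.filter (fun l : Fin (2 ^ n) => 1 ≤ l.val ∧ polarG n m l = 1),
        cyc (2 ^ n) l = (1 + cyc (2 ^ n) 1) ^ m.val + 1 := by
  have hzero : Finset.univ.filter (fun l : Fin (2 ^ n) => ¬1 ≤ l.val) = {0} := by
    ext l
    simp only [Finset.mem_filter, Finset.mem_univ, true_and, Finset.mem_singleton, not_le,
      Nat.lt_one_iff, Fin.ext_iff, Fin.val_zero]
  rw [← Finset.filter_filter, Finset.sum_filter_eq_one_eq_sum_smul,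
    one_add_cyc_one_pow_of_lt m.isLt,
    ← Finset.sum_filter_add_sum_filter_not Finset.univ (1 ≤ ·.val),
    hzero, Finset.sum_singleton]
  simp only [polarG_apply, Fin.val_zero, Nat.choose_zero_right, Nat.cast_one, cyc_zero, one_smul,
    add_assoc, CharTwo.add_self_eq_zero, add_zero]

/-- For `0 ≤ m ≤ N−1`, `D_N^m G_n = G_n ∑_{l : g_{m+1,l+1}=1, 1 ≤ l ≤ N−1} C_N^l`,
where for `m = 0` the sum of shifts is the identity matrix. -/
theorem stmt7 (n m : ℕ) (hm : m ≤ 2^n - 1) :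
    toepD (2^n) m * polarG n =
      polarG n *
        (if m = 0 then 1 else
          ∑ l ∈ Finset.univ.filter
              (fun l : Fin (2^n) => 1 ≤ l.val ∧
                polarG n ⟨m, by have h0 : (0:ℕ) < 2^n := Nat.two_pow_pos n; omega⟩ l = 1),
            cyc (2^n) l.val) := by
  split_ifs with hm0
  · rw [hm0, toepD_zero, Matrix.one_mul, Matrix.mul_one]
  · rw [sum_filter_polarG_eq_one]
    ext i j
    rw [toepD_mul_polarG_apply hm0, polarG_mul_apply, mul_add, mul_one, ← pow_add, add_comm]
end

section
/- Let G_n = F^{⊗n}, N = 2^n, A ⊆ {1,…,N} a nonempty index set, and T_N an upper-triangular Toeplitz matrix over 𝔽₂ with unit diagonal. The minimum distance of the PAC code {v T_N G_n : v ∈ 𝔽₂^N, supp(v) ⊆ A, v ≠ 0} is at least the minimum distance of the polar code {v G_n : v ∈ 𝔽₂^N, supp(v) ⊆ A, v ≠ 0}, which equals min_{i ∈ A} w(g_i). -/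
/-- The upper-triangular Toeplitz matrix determined by its first row `c`. -/
def toepT {N : ℕ} (c : Fin N → ZMod 2) : Matrix (Fin N) (Fin N) (ZMod 2) :=
  Matrix.of fun i j =>
    if h : i.val ≤ j.val then c ⟨j.val - i.val, by omega⟩ else 0

/-- Hamming weight of a binary vector. -/
def wt {N : ℕ} (v : Fin N → ZMod 2) : ℕ :=
  (Finset.univ.filter fun j => v j ≠ 0).card

open Finset Matrix

namespace Nat

theorem two_pow_add_eq_two_pow_or {n i : ℕ} (hi : i < 2 ^ n) : 2 ^ n + i = 2 ^ n ||| i := by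
  simpa using two_pow_add_eq_or_of_lt hi 1

theorem and_two_pow_add {n i j : ℕ} (hi : i < 2 ^ n) (hj : j < 2 ^ n) :
    j &&& (2 ^ n + i) = j &&& i := by
  have hjn := testBit_lt_two_pow hj
  rw [two_pow_add_eq_two_pow_or hi]
  apply eq_of_testBit_eq
  intro k
  simp only [testBit_and, testBit_or, testBit_two_pow]
  grind

theorem two_pow_add_and_two_pow_add {n i j : ℕ} (hi : i < 2 ^ n) (hj : j < 2 ^ n) :
    (2 ^ n + j) &&& (2 ^ n + i) = 2 ^ n + (j &&& i) := by
  rw [two_pow_add_eq_two_pow_or hi, two_pow_add_eq_two_pow_or hj,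
    two_pow_add_eq_two_pow_or (and_lt_two_pow _ hi)]
  apply eq_of_testBit_eq
  intro k
  simp only [testBit_and, testBit_or]
  grind

end Nat

section PolarTransform

/-- The encoding `u ↦ u G_n` for messages indexed by `ℕ`; entries `u i` with `i ≥ 2 ^ n` are
ignored. -/
def polarTransform (n : ℕ) (u : ℕ → ZMod 2) (j : ℕ) : ZMod 2 :=
  ∑ i ∈ range (2 ^ n), if j &&& i = j then u i else 0

def weightBelow (N : ℕ) (x : ℕ → ZMod 2) : ℕ :=
  ∑ j ∈ range N, if x j ≠ 0 then 1 else 0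

variable {N : ℕ}

@[simp]
theorem weightBelow_zero : weightBelow N 0 = 0 := by
  simp [weightBelow]

theorem weightBelow_add (M N : ℕ) (x : ℕ → ZMod 2) :
    weightBelow (M + N) x = weightBelow M x + weightBelow N fun j => x (M + j) :=
  sum_range_add _ M N

theorem weightBelow_congr {x y : ℕ → ZMod 2} (h : ∀ j < N, x j = y j) :
    weightBelow N x = weightBelow N y :=
  sum_congr rfl fun j hj => by rw [h j (mem_range.mp hj)]

theorem weightBelow_le_add (x y : ℕ → ZMod 2) :
    weightBelow N x ≤ weightBelow N (x + y) + weightBelow N y := by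
  rw [weightBelow, weightBelow, weightBelow, ← sum_add_distrib]
  refine sum_le_sum fun j _ => ?_
  by_cases hx : x j = 0 <;> by_cases hy : y j = 0 <;> simp [hx, hy]

variable {n : ℕ} {u : ℕ → ZMod 2}

theorem polarTransform_eq_zero (hu : ∀ i < 2 ^ n, u i = 0) : polarTransform n u = 0 := by
  funext j
  exact sum_eq_zero fun i hi => by simp [hu i (mem_range.mp hi)]

theorem polarTransform_succ_of_lt {j : ℕ} (hj : j < 2 ^ n) :
    polarTransform (n + 1) u j =
      polarTransform n u j + polarTransform n (fun i => u (2 ^ n + i)) j := by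
  rw [polarTransform, pow_succ, mul_two, sum_range_add]
  congr 1
  exact sum_congr rfl fun i hi => by rw [Nat.and_two_pow_add (mem_range.mp hi) hj]

theorem polarTransform_succ_two_pow_add {j : ℕ} (hj : j < 2 ^ n) :
    polarTransform (n + 1) u (2 ^ n + j) = polarTransform n (fun i => u (2 ^ n + i)) j := by
  rw [polarTransform, pow_succ, mul_two, sum_range_add]
  have hlow : ∀ i < 2 ^ n, (2 ^ n + j) &&& i ≠ 2 ^ n + j := fun i hi h => by
    have := Nat.and_le_right (n := 2 ^ n + j) (m := i)
    omega
  rw [sum_eq_zero fun i hi => if_neg (hlow i (mem_range.mp hi)), zero_add]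
  exact sum_congr rfl fun i hi => by
    simp only [Nat.two_pow_add_and_two_pow_add (mem_range.mp hi) hj, add_right_inj]

/-- The Plotkin decomposition `u G_{n+1} = (u_L G_n + u_R G_n | u_R G_n)`, at the level of
weights. -/
theorem weightBelow_polarTransform_succ (n : ℕ) (u : ℕ → ZMod 2) :
    weightBelow (2 ^ (n + 1)) (polarTransform (n + 1) u) =
      weightBelow (2 ^ n) (polarTransform n u + polarTransform n fun i => u (2 ^ n + i)) +
        weightBelow (2 ^ n) (polarTransform n fun i => u (2 ^ n + i)) := by
  rw [pow_succ, mul_two, weightBelow_add]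
  congr 1
  · exact weightBelow_congr fun j hj => polarTransform_succ_of_lt hj
  · exact weightBelow_congr fun j hj => polarTransform_succ_two_pow_add hj

theorem weightBelow_polarTransform_single_le {i₀ : ℕ} (hi₀ : i₀ < 2 ^ n) (hu : u i₀ ≠ 0)
    (hmin : ∀ i < i₀, u i = 0) :
    weightBelow (2 ^ n) (polarTransform n (Pi.single i₀ 1)) ≤
      weightBelow (2 ^ n) (polarTransform n u) := by
  induction n generalizing u i₀ with
  | zero =>
    obtain rfl : i₀ = 0 := by omega
    simp [weightBelow, polarTransform, hu]
  | succ n ih =>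
    rw [weightBelow_polarTransform_succ, weightBelow_polarTransform_succ]
    by_cases hlow : i₀ < 2 ^ n
    · have hright : ∀ i < 2 ^ n, (Pi.single i₀ 1 : ℕ → ZMod 2) (2 ^ n + i) = 0 :=
        fun i _ => Pi.single_eq_of_ne (by omega) _
      rw [polarTransform_eq_zero hright, add_zero, weightBelow_zero, add_zero]
      exact (ih hlow hu hmin).trans (weightBelow_le_add _ _)
    · obtain ⟨i₁, rfl⟩ := Nat.exists_eq_add_of_le (not_lt.mp hlow)
      have hright : (fun i => (Pi.single (2 ^ n + i₁) 1 : ℕ → ZMod 2) (2 ^ n + i)) =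
          Pi.single i₁ 1 := by
        funext i
        simp [Pi.single_apply]
      rw [polarTransform_eq_zero fun i hi => hmin i (by omega),
        polarTransform_eq_zero (u := Pi.single (2 ^ n + i₁) 1)
          fun i hi => Pi.single_eq_of_ne (by omega) _, zero_add, zero_add,
        hright]
      have := ih (u := fun i => u (2 ^ n + i)) (by rw [pow_succ] at hi₀; omega) hu
        fun i hi => hmin _ (by omega)
      omega

end PolarTransform

section Bridge

variable {N : ℕ}

theorem wt_eq_weightBelow (x : Fin N → ZMod 2) :
    wt x = weightBelow N (Function.extend Fin.val x 0) := by
  rw [wt, card_filter, weightBelow, ← Fin.sum_univ_eq_sum_range]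
  simp only [Fin.val_injective.extend_apply]

theorem vecMul_polarG_apply (n : ℕ) (v : Fin (2 ^ n) → ZMod 2) (j : Fin (2 ^ n)) :
    vecMul v (polarG n) j = polarTransform n (Function.extend Fin.val v 0) j := by
  rw [polarTransform, ← Fin.sum_univ_eq_sum_range]
  simp [vecMul, dotProduct, polarG, Fin.val_injective.extend_apply]

theorem wt_vecMul_polarG (n : ℕ) (v : Fin (2 ^ n) → ZMod 2) :
    wt (vecMul v (polarG n)) =
      weightBelow (2 ^ n) (polarTransform n (Function.extend Fin.val v 0)) := by
  rw [wt_eq_weightBelow]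
  refine weightBelow_congr fun j hj => ?_
  rw [← Fin.val_mk hj, Fin.val_injective.extend_apply, vecMul_polarG_apply]

theorem extend_val_single (i : Fin N) :
    Function.extend Fin.val (Pi.single i 1 : Fin N → ZMod 2) 0 = Pi.single (i : ℕ) 1 := by
  funext j
  by_cases hj : j < N
  · rw [← Fin.val_mk hj, Fin.val_injective.extend_apply]
    simp [Pi.single_apply, Fin.ext_iff]
  · rw [Function.extend_apply' _ _ _ fun ⟨k, hk⟩ => hj (hk ▸ k.isLt),
      Pi.single_eq_of_ne (by omega)]
    rfl

theorem wt_polarG_le_wt_vecMul {n : ℕ} {v : Fin (2 ^ n) → ZMod 2} {i₀ : Fin (2 ^ n)}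
    (hv : v i₀ ≠ 0) (hmin : ∀ i < i₀, v i = 0) :
    wt (polarG n i₀) ≤ wt (vecMul v (polarG n)) := by
  have hrow : polarG n i₀ = vecMul (Pi.single i₀ 1) (polarG n) := (single_one_vecMul _ _).symm
  rw [hrow, wt_vecMul_polarG, wt_vecMul_polarG, extend_val_single]
  refine weightBelow_polarTransform_single_le i₀.isLt (by rwa [Fin.val_injective.extend_apply]) ?_
  intro i hi
  rw [← Fin.val_mk (hi.trans i₀.isLt), Fin.val_injective.extend_apply]
  exact hmin _ hi

end Bridge

section Triangular

variable {m R : Type*} [Fintype m] [LinearOrder m] [NonUnitalNonAssocSemiring R]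
  {M : Matrix m m R} {v : m → R} {i₀ : m}

theorem Matrix.BlockTriangular.vecMul_apply_eq_zero (hM : M.BlockTriangular id)
    (hv : ∀ i < i₀, v i = 0) {j : m} (hj : j < i₀) : vecMul v M j = 0 := by
  refine sum_eq_zero fun i _ => ?_
  rcases lt_or_ge i i₀ with hi | hi
  · simp [hv i hi]
  · simp [hM (hj.trans_le hi)]

theorem Matrix.BlockTriangular.vecMul_apply_self (hM : M.BlockTriangular id)
    (hv : ∀ i < i₀, v i = 0) : vecMul v M i₀ = v i₀ * M i₀ i₀ := by
  refine sum_eq_single i₀ (fun i _ hi => ?_) (by simp)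
  rcases hi.lt_or_gt with hi | hi
  · simp [hv i hi]
  · simp [hM hi]

end Triangular

theorem toepT_blockTriangular {N : ℕ} (c : Fin N → ZMod 2) : (toepT c).BlockTriangular id :=
  fun _ _ hji => dif_neg (not_le.mpr hji)

theorem toepT_apply_self {N : ℕ} (c : Fin N → ZMod 2) (i : Fin N) :
    toepT c i i = c ⟨0, i.pos⟩ := by
  simp [toepT]

theorem exists_ne_zero_forall_lt_eq_zero {ι M : Type*} [LinearOrder ι] [WellFoundedLT ι] [Zero M]
    {v : ι → M} (hv : v ≠ 0) : ∃ i₀, v i₀ ≠ 0 ∧ ∀ i < i₀, v i = 0 := by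
  obtain ⟨i, hi⟩ := Function.ne_iff.mp hv
  obtain ⟨i₀, hi₀, hmin⟩ := wellFounded_lt.has_min {i | v i ≠ 0} ⟨i, hi⟩
  exact ⟨i₀, hi₀, fun i hi => not_not.mp fun h => hmin i h hi⟩

def codeWeights {N M : ℕ} (A : Finset (Fin N)) (f : (Fin N → ZMod 2) → Fin M → ZMod 2) :
    Set ℕ :=
  {w | ∃ v : Fin N → ZMod 2, v ≠ 0 ∧ (∀ j, v j ≠ 0 → j ∈ A) ∧ w = wt (f v)}

theorem wt_mem_codeWeights_single {N M : ℕ} {A : Finset (Fin N)} {i : Fin N} (hi : i ∈ A)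
    (f : (Fin N → ZMod 2) → Fin M → ZMod 2) : wt (f (Pi.single i 1)) ∈ codeWeights A f := by
  refine ⟨Pi.single i 1, by simp, fun j hj => ?_, rfl⟩
  by_contra h
  exact hj (Pi.single_eq_of_ne (ne_of_mem_of_not_mem hi h).symm _)

theorem isLeast_codeWeights_polarG {n : ℕ} {A : Finset (Fin (2 ^ n))} (hA : A.Nonempty) :
    IsLeast (codeWeights A fun v => vecMul v (polarG n)) (A.inf' hA fun i => wt (polarG n i)) := by
  constructor
  · obtain ⟨i, hi, hmin⟩ := exists_mem_eq_inf' hA fun i => wt (polarG n i)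
    rw [hmin]
    convert wt_mem_codeWeights_single hi fun v => vecMul v (polarG n) using 2
    exact (single_one_vecMul i (polarG n)).symm
  · rintro _ ⟨v, hv, hsupp, rfl⟩
    obtain ⟨i₀, hi₀, hmin⟩ := exists_ne_zero_forall_lt_eq_zero hv
    exact (inf'_le _ (hsupp i₀ hi₀)).trans (wt_polarG_le_wt_vecMul hi₀ hmin)

/-- The minimum distance of the PAC code `{v T_N G_n : supp(v) ⊆ A, v ≠ 0}` is at
least the minimum distance of the polar code `{v G_n : supp(v) ⊆ A, v ≠ 0}`, which
equals `min_{i ∈ A} w(g_i)`. -/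
theorem stmt11 (n : ℕ) (A : Finset (Fin (2^n))) (hA : A.Nonempty)
    (c : Fin (2^n) → ZMod 2) (hc : c ⟨0, Nat.two_pow_pos n⟩ = 1) :
    sInf {w : ℕ | ∃ v : Fin (2^n) → ZMod 2, v ≠ 0 ∧ (∀ j, v j ≠ 0 → j ∈ A) ∧
        w = wt (Matrix.vecMul (Matrix.vecMul v (toepT c)) (polarG n))} ≥
      sInf {w : ℕ | ∃ v : Fin (2^n) → ZMod 2, v ≠ 0 ∧ (∀ j, v j ≠ 0 → j ∈ A) ∧
        w = wt (Matrix.vecMul v (polarG n))} ∧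
    sInf {w : ℕ | ∃ v : Fin (2^n) → ZMod 2, v ≠ 0 ∧ (∀ j, v j ≠ 0 → j ∈ A) ∧
        w = wt (Matrix.vecMul v (polarG n))} =
      A.inf' hA fun i => wt (polarG n i) := by
  change sInf (codeWeights A fun v => vecMul (vecMul v (toepT c)) (polarG n)) ≥
    sInf (codeWeights A fun v => vecMul v (polarG n)) ∧
      sInf (codeWeights A fun v => vecMul v (polarG n)) = _
  rw [(isLeast_codeWeights_polarG hA).csInf_eq]
  refine ⟨le_csInf ⟨_, wt_mem_codeWeights_single hA.choose_spec _⟩ ?_, rfl⟩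
  rintro _ ⟨v, hv, hsupp, rfl⟩
  obtain ⟨i₀, hi₀, hmin⟩ := exists_ne_zero_forall_lt_eq_zero hv
  have hT := toepT_blockTriangular c
  have hfirst : vecMul v (toepT c) i₀ ≠ 0 := by
    rwa [hT.vecMul_apply_self hmin, toepT_apply_self, hc, mul_one]
  exact (inf'_le _ (hsupp i₀ hi₀)).trans
    (wt_polarG_le_wt_vecMul hfirst fun _ hj => hT.vecMul_apply_eq_zero hmin hj)
end
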